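/- arXiv:1601.02876 — 3 statements merged into one kernel-verified Lean document; each statement's English description precedes it below -/
import Mathlib

section
/- Let H = H₀ + V where H₀ is a linear differential operator and V, U are multiplication operators with U nowhere zero. Suppose S = S₀ + W and S_U = S₀ + W_U are operators satisfying [S, H] = R∘H, [S_U, H₀ + U] = R∘(H₀ + U), and [S₀, H₀] = R∘H₀ for a common operator R (where W, W_U are multiplication operators). Then the operator S̃ = S − (W_U/U)∘H commutes exactly with H̃ = U⁻¹∘H, i.e. [S̃, H̃] = 0. -/
/-- The operator of multiplication by a function. -/
noncomputable def mulOp {X : Type*} (f : X → ℂ) : Module.End ℂ (X → ℂ) where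
  toFun g := fun x => f x * g x
  map_add' g h := by funext x; simp [mul_add]
  map_smul' c g := by funext x; simp [Pi.smul_apply, smul_eq_mul]; ring

lemma mulOp_mul {X : Type*} (f g : X → ℂ) :
    mulOp f * mulOp g = mulOp (fun x => f x * g x) := by
  apply LinearMap.ext
  intro p
  funext x
  simp [mulOp, Module.End.mul_apply, mul_assoc]

lemma mulOp_one {X : Type*} : (mulOp (fun _ : X => (1 : ℂ))) = 1 := by
  apply LinearMap.ext
  intro p
  funext x
  simp [mulOp]

lemma mulOp_comm {X : Type*} (f g : X → ℂ) :
    mulOp f * mulOp g = mulOp g * mulOp f := by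
  rw [mulOp_mul, mulOp_mul]
  congr 1
  funext x
  ring

/-- Abstract ring-theoretic core of the conformal Stäckel transform. -/
lemma stackel_key {A : Type*} [Ring A] (s0 h0 r v u w wu up : A)
    (d1 : u * up - 1 = 0) (d2 : up * u - 1 = 0)
    (d4 : wu * up - up * wu = 0) (d5 : wu * v - v * wu = 0)
    (d6 : w * up - up * w = 0) (d7 : wu * u - u * wu = 0)
    (dS : (s0 + w) * (h0 + v) - (h0 + v) * (s0 + w) - r * (h0 + v) = 0)
    (dSU : (s0 + wu) * (h0 + u) - (h0 + u) * (s0 + wu) - r * (h0 + u) = 0)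
    (d0 : s0 * h0 - h0 * s0 - r * h0 = 0) :
    ((s0 + w) - wu * up * (h0 + v)) * (up * (h0 + v)) -
      (up * (h0 + v)) * ((s0 + w) - wu * up * (h0 + v)) = 0 := by
  have expand :
      ((s0 + w) - wu * up * (h0 + v)) * (up * (h0 + v)) -
        (up * (h0 + v)) * ((s0 + w) - wu * up * (h0 + v)) =
      up * ((s0 + w) * (h0 + v) - (h0 + v) * (s0 + w) - r * (h0 + v))
      - up * ((s0 + wu) * (h0 + u) - (h0 + u) * (s0 + wu) - r * (h0 + u)) * (up * (h0 + v))
      + up * (s0 * h0 - h0 * s0 - r * h0) * (up * (h0 + v))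
      + up * (wu * u - u * wu) * (up * (h0 + v))
      - up * r * (u * up - 1) * (h0 + v)
      - (up * u - 1) * (s0 * (up * (h0 + v)))
      + up * s0 * (u * up - 1) * (h0 + v)
      + (w * up - up * w) * (h0 + v)
      - (wu * up - up * wu) * ((h0 + v) * (up * (h0 + v)))
      - up * (wu * v - v * wu) * (up * (h0 + v)) := by
    noncomm_ring
  rw [expand, d1, d2, d4, d5, d6, d7, dS, dSU, d0]
  simp

/-- Conformal Stäckel transform: if `S = S₀ + W` is a conformal symmetry of
`H = H₀ + V`, `S_U = S₀ + W_U` is in conformal involution with `H₀ + U` (with the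
same operator `R`), and `[S₀,H₀] = R∘H₀`, then `S̃ = S − (W_U/U)∘H` commutes exactly
with `H̃ = U⁻¹∘H`. -/
theorem stmt1 {X : Type*} (H0 S0 R : Module.End ℂ (X → ℂ))
    (V U W WU : X → ℂ) (hU : ∀ x, U x ≠ 0)
    (hS : ⁅S0 + mulOp W, H0 + mulOp V⁆ = R * (H0 + mulOp V))
    (hSU : ⁅S0 + mulOp WU, H0 + mulOp U⁆ = R * (H0 + mulOp U))
    (h0 : ⁅S0, H0⁆ = R * H0) :
    ⁅(S0 + mulOp W) - mulOp (fun x => WU x / U x) * (H0 + mulOp V),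
      mulOp (fun x => (U x)⁻¹) * (H0 + mulOp V)⁆ = 0 := by
  have hdiv : mulOp (fun x => WU x / U x)
      = mulOp WU * mulOp (fun x => (U x)⁻¹) := by
    rw [mulOp_mul]
    simp only [div_eq_mul_inv]
  have d1 : mulOp U * mulOp (fun x => (U x)⁻¹) - 1 = 0 := by
    rw [mulOp_mul]
    have : (fun x => U x * (U x)⁻¹) = fun _ : X => (1 : ℂ) := by
      funext x; exact mul_inv_cancel₀ (hU x)
    rw [this, mulOp_one]; exact sub_self _
  have d2 : mulOp (fun x => (U x)⁻¹) * mulOp U - 1 = 0 := by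
    rw [mulOp_comm]; exact d1
  rw [Ring.lie_def] at hS hSU h0 ⊢
  rw [hdiv]
  exact stackel_key S0 H0 R (mulOp V) (mulOp U) (mulOp W) (mulOp WU)
    (mulOp (fun x => (U x)⁻¹)) d1 d2
    (by rw [mulOp_comm]; exact sub_self _) (by rw [mulOp_comm]; exact sub_self _)
    (by rw [mulOp_comm]; exact sub_self _) (by rw [mulOp_comm]; exact sub_self _)
    (by rw [hS]; exact sub_self _) (by rw [hSU]; exact sub_self _) (by rw [h0]; exact sub_self _)
end

section
/- Let H = H₀ + V with H₀ a linear differential operator and V, U multiplication operators, U nowhere zero. Suppose L is an operator satisfying [L, H₀] = R∘H₀, [L, V] = R·V (i.e. [L,V] is multiplication by R·V), and [L, U] = R·U, where R is a fixed function. Then [L, U⁻¹∘H] = 0, i.e. L is a true symmetry of the Stäckel-transformed operator H̃ = U⁻¹(H₀ + V). -/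
/-- A first-order conformal symmetry `L` of `H = H₀ + V` (with `[L,H₀] = R∘H₀`,
`[L,V] = R·V`, `[L,U] = R·U` for a fixed function `R`) is a true symmetry of the
Stäckel-transformed operator `H̃ = U⁻¹(H₀ + V)`. -/
theorem stmt2 {X : Type*} (H0 L : Module.End ℂ (X → ℂ)) (V U R : X → ℂ)
    (hU : ∀ x, U x ≠ 0)
    (h1 : ⁅L, H0⁆ = mulOp R * H0)
    (h2 : ⁅L, mulOp V⁆ = mulOp (fun x => R x * V x))
    (h3 : ⁅L, mulOp U⁆ = mulOp (fun x => R x * U x)) :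
    ⁅L, mulOp (fun x => (U x)⁻¹) * (H0 + mulOp V)⁆ = 0 := by
  set W := mulOp (fun x => (U x)⁻¹) with hWdef
  set A := mulOp R with hA
  set B := mulOp U with hB
  have hWB : W * B = 1 := by
    rw [hWdef, hB, mulOp_mul]
    ext g x
    simp [mulOp, inv_mul_cancel₀ (hU x)]
  have hBW : B * W = 1 := by
    rw [hWdef, hB, mulOp_mul]
    ext g x
    simp [mulOp, mul_inv_cancel₀ (hU x)]
  have hWA : W * A = A * W := by
    rw [hWdef, hA, mulOp_mul, mulOp_mul]
    congr 1; funext x; ring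
  rw [Ring.lie_def] at h1 h2 h3
  have h2' : L * mulOp V - mulOp V * L = A * mulOp V := by
    rw [h2, hA, mulOp_mul]
  have h3' : L * B - B * L = A * B := by
    rw [h3, hA, hB, mulOp_mul]
  -- derive L * W = W * L - A * W
  have h4 := congrArg (fun T => W * T * W) h3'
  simp only [mul_sub, sub_mul, mul_assoc] at h4
  rw [hBW, mul_one, mul_one] at h4
  rw [show W * (B * (L * W)) = L * W from by rw [← mul_assoc, hWB, one_mul]] at h4
  rw [hWA] at h4
  have key : L * W = W * L - A * W := by rw [← h4]; noncomm_ring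
  -- combined conformal symmetry of H = H0 + V
  have hLH : L * (H0 + mulOp V) = (H0 + mulOp V) * L + A * (H0 + mulOp V) := by
    have h5 : L * (H0 + mulOp V) - (H0 + mulOp V) * L = A * (H0 + mulOp V) := by
      simp only [mul_add, add_mul]
      rw [add_sub_add_comm, h1, h2']
    linear_combination (norm := noncomm_ring) h5
  rw [Ring.lie_def, sub_eq_zero]
  calc L * (W * (H0 + mulOp V)) = (W * L - A * W) * (H0 + mulOp V) := by
        rw [← mul_assoc, key]
    _ = W * (L * (H0 + mulOp V)) - A * (W * (H0 + mulOp V)) := by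
        simp only [sub_mul, mul_add, mul_sub, mul_assoc]
        abel
    _ = W * ((H0 + mulOp V) * L + A * (H0 + mulOp V)) - A * (W * (H0 + mulOp V)) := by
        rw [hLH]
    _ = W * (H0 + mulOp V) * L + (W * A - A * W) * (H0 + mulOp V) := by
        simp only [sub_mul, mul_add, add_mul, mul_sub, mul_assoc]
        abel
    _ = W * (H0 + mulOp V) * L := by rw [hWA, sub_self, zero_mul, add_zero]
end

section
/- Let V_{[1,1,1,1]}(x) = a₁/x₁² + a₂/x₂² + a₃/x₃² + a₄/x₄² with the ε-dependent parameters a₁ = −(1/2)(b₁/ε² + b₂/(2ε⁴)), a₂ = −b₂/(4ε⁴), a₃ = b₃, a₄ = b₄, and let x(ε) be given by x₁ + ix₂ = (i√2/ε)(x₁'+ix₂') + (iε/√2)(x₁'−ix₂'), x₁ − ix₂ = −(iε/√2)(x₁'−ix₂'), x₃ = x₃', x₄ = x₄'. Then, for fixed x' with (x₁'+ix₂')·x₃'·x₄' ≠ 0, the limit as ε → 0 of V_{[1,1,1,1]}(x(ε)) equals V_{[2,1,1]}(x') = b₁/(x₁'+ix₂')² + b₂(x₁'−ix₂')/(x₁'+ix₂')³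 + b₃/x₃'² + b₄/x₄'². -/
/-!
In the light-cone coordinates `u = x₁' + i x₂'`, `v = x₁' − i x₂'` the contracted coordinates
satisfy `x₁(ε)² = −u²/(2ε²)` and `x₂(ε)² = (u + ε²v)²/(2ε²)`. The `ε⁻²` and `ε⁻⁴` poles of the
parameters then cancel exactly, leaving the rational function
`b₁/u² + b₂(2uv + ε²v²)/(2u²(u + ε²v)²)`, which is continuous at `ε = 0` with value
`b₁/u² + b₂v/u³`.
-/

open Complex Filter Topology

section BocherContraction

variable {s ε : ℂ} (u v : ℂ)

lemma bocher_x1_sq (hε : ε ≠ 0) (hs : s ^ 2 = 2) :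
    (((I * s / ε) * u + (I * ε / s) * v + -(I * ε / s) * v) / 2) ^ 2 = -u ^ 2 / (2 * ε ^ 2) := by
  have hs0 : s ≠ 0 := by rintro rfl; norm_num at hs
  field_simp
  linear_combination s ^ 4 * u ^ 2 * I_sq - s ^ 2 * u ^ 2 * hs

lemma bocher_x2_sq (hε : ε ≠ 0) (hs : s ^ 2 = 2) :
    (((I * s / ε) * u + (I * ε / s) * v - -(I * ε / s) * v) / (2 * I)) ^ 2
      = (u + ε ^ 2 * v) ^ 2 / (2 * ε ^ 2) := by
  have hs0 : s ≠ 0 := by rintro rfl; norm_num at hs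
  field_simp
  linear_combination (s ^ 2 * u ^ 2 - 2 * ε ^ 4 * v ^ 2) * hs

lemma bocher_pole_cancellation (b1 b2 : ℂ) (hε : ε ≠ 0) (hu : u ≠ 0)
    (huv : u + ε ^ 2 * v ≠ 0) :
    (-(1 / 2 : ℂ) * (b1 / ε ^ 2 + b2 / (2 * ε ^ 4))) / (-u ^ 2 / (2 * ε ^ 2)) +
        (-b2 / (4 * ε ^ 4)) / ((u + ε ^ 2 * v) ^ 2 / (2 * ε ^ 2))
      = b1 / u ^ 2 + b2 * (2 * u * v + ε ^ 2 * v ^ 2) / (2 * u ^ 2 * (u + ε ^ 2 * v) ^ 2) := by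
  field_simp
  ring

lemma tendsto_bocher_limit (b1 b2 : ℂ) (hu : u ≠ 0) :
    Tendsto (fun ε : ℂ => b1 / u ^ 2 + b2 * (2 * u * v + ε ^ 2 * v ^ 2) /
        (2 * u ^ 2 * (u + ε ^ 2 * v) ^ 2))
      (𝓝 0) (𝓝 (b1 / u ^ 2 + b2 * v / u ^ 3)) := by
  convert ContinuousAt.tendsto (x := (0 : ℂ)) ?_ using 2
  · norm_num
    field_simp
  · fun_prop (disch := simp [hu])

end BocherContraction

theorem stmt13_general (b1 b2 b3 b4 : ℂ) (x1' x2' x3' x4' : ℂ)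
    (h12 : x1' + I * x2' ≠ 0) :
    Tendsto
      (fun ε : ℂ =>
        let A := (I * (Real.sqrt 2 : ℂ) / ε) * (x1' + I * x2') +
          (I * ε / (Real.sqrt 2 : ℂ)) * (x1' - I * x2')
        let B := -(I * ε / (Real.sqrt 2 : ℂ)) * (x1' - I * x2')
        let x1 := (A + B) / 2
        let x2 := (A - B) / (2 * I)
        let a1 := -(1 / 2 : ℂ) * (b1 / ε ^ 2 + b2 / (2 * ε ^ 4))
        let a2 := -b2 / (4 * ε ^ 4)
        a1 / x1 ^ 2 + a2 / x2 ^ 2 + b3 / x3' ^ 2 + b4 / x4' ^ 2)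
      (𝓝[≠] (0 : ℂ))
      (𝓝 (b1 / (x1' + I * x2') ^ 2 + b2 * (x1' - I * x2') / (x1' + I * x2') ^ 3 +
        b3 / x3' ^ 2 + b4 / x4' ^ 2)) := by
  set u := x1' + I * x2'
  set v := x1' - I * x2'
  have hs : ((Real.sqrt 2 : ℝ) : ℂ) ^ 2 = 2 := by
    norm_cast
    exact Real.sq_sqrt zero_le_two
  have huv : ∀ᶠ ε in 𝓝 (0 : ℂ), u + ε ^ 2 * v ≠ 0 :=
    (by fun_prop : ContinuousAt (fun ε : ℂ => u + ε ^ 2 * v) 0).eventually_ne (by simpa using h12)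
  refine Tendsto.congr' ?_
    ((((tendsto_bocher_limit u v b1 b2 h12).mono_left nhdsWithin_le_nhds).add_const _).add_const _)
  filter_upwards [self_mem_nhdsWithin, nhdsWithin_le_nhds huv] with ε hε hε_uv
  dsimp only
  rw [bocher_x1_sq u v hε hs, bocher_x2_sq u v hε hs,
    bocher_pole_cancellation u v b1 b2 hε h12 hε_uv]

/-- The Bôcher contraction `[1,1,1,1] → [2,1,1]` of the generic potential:
with `a₁ = −(1/2)(b₁/ε² + b₂/(2ε⁴))`, `a₂ = −b₂/(4ε⁴)`, `a₃ = b₃`, `a₄ = b₄`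
and the contracted coordinates `x(ε)` determined by
`x₁+ix₂ = (i√2/ε)(x₁'+ix₂') + (iε/√2)(x₁'−ix₂')`, `x₁−ix₂ = −(iε/√2)(x₁'−ix₂')`,
`x₃ = x₃'`, `x₄ = x₄'`, the potential `V_{[1,1,1,1]}(x(ε))` tends, as `ε → 0`,
to `V_{[2,1,1]}(x') = b₁/(x₁'+ix₂')² + b₂(x₁'−ix₂')/(x₁'+ix₂')³ + b₃/x₃'² + b₄/x₄'²`. -/
theorem stmt13 (b1 b2 b3 b4 : ℂ) (x1' x2' x3' x4' : ℂ)
    (h12 : x1' + I * x2' ≠ 0) (h3 : x3' ≠ 0) (h4 : x4' ≠ 0) :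
    Tendsto
      (fun ε : ℂ =>
        let A := (I * (Real.sqrt 2 : ℂ) / ε) * (x1' + I * x2') +
          (I * ε / (Real.sqrt 2 : ℂ)) * (x1' - I * x2')
        let B := -(I * ε / (Real.sqrt 2 : ℂ)) * (x1' - I * x2')
        let x1 := (A + B) / 2
        let x2 := (A - B) / (2 * I)
        let a1 := -(1 / 2 : ℂ) * (b1 / ε ^ 2 + b2 / (2 * ε ^ 4))
        let a2 := -b2 / (4 * ε ^ 4)
        a1 / x1 ^ 2 + a2 / x2 ^ 2 + b3 / x3' ^ 2 + b4 / x4' ^ 2)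
      (𝓝[≠] (0 : ℂ))
      (𝓝 (b1 / (x1' + I * x2') ^ 2 + b2 * (x1' - I * x2') / (x1' + I * x2') ^ 3 +
        b3 / x3' ^ 2 + b4 / x4' ^ 2)) :=
  stmt13_general b1 b2 b3 b4 x1' x2' x3' x4' h12
end
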